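/- arXiv:2604.17847 — 6 statements merged into one kernel-verified Lean document; each statement's English description precedes it below -/
import Mathlib

section
/- If p is an odd prime with Legendre symbol (5/p) = -1, then p divides F_{p+1}, i.e., the rank of apparition z(p) divides p + 1. -/
/-!
In a field `K ⊇ 𝔽_p` containing a square root `s` of `5`, Binet's formula reads
`2ⁿ Fₙ s = (1 + s)ⁿ - (1 - s)ⁿ`. When `5` is not a square mod `p`, Euler's criterion gives
`s ^ p = -s`, so the Frobenius swaps `1 + s` and `1 - s`; hence `(1 + s) ^ (p + 1)` and
`(1 - s) ^ (p + 1)` both equal `(1 + s) (1 - s)`, and `F_{p+1} = 0` in `K`.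
Since `gcd (F_m, F_n) = F_{gcd (m, n)}`, the indices `k` with `p ∣ F_k` are the multiples of `z(p)`.
-/

/-- Rank of apparition: least `k ≥ 1` with `p ∣ fib k`. -/
noncomputable def fibRank (p : ℕ) : ℕ := sInf {k | 0 < k ∧ p ∣ Nat.fib k}

/-- Pisano period: least `k ≥ 1` with `fib (n + k) ≡ fib n [MOD q]` for all `n`. -/
noncomputable def pisano (q : ℕ) : ℕ :=
  sInf {k | 0 < k ∧ ∀ n, Nat.fib (n + k) ≡ Nat.fib n [MOD q]}

theorem fibRank_dvd_of_dvd_fib {p n : ℕ} (hn : 0 < n) (h : p ∣ Nat.fib n) : fibRank p ∣ n := by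
  obtain ⟨hpos, hdvd⟩ : fibRank p ∈ {k | 0 < k ∧ p ∣ Nat.fib k} := Nat.sInf_mem ⟨n, hn, h⟩
  have hle : fibRank p ≤ (fibRank p).gcd n :=
    Nat.sInf_le ⟨Nat.gcd_pos_of_pos_right _ hn, Nat.fib_gcd _ _ ▸ Nat.dvd_gcd hdvd h⟩
  rw [← (Nat.gcd_le_left n hpos).antisymm hle]
  exact Nat.gcd_dvd_right _ _

theorem two_pow_mul_fib_mul_eq_sub {R : Type*} [CommRing R] {s : R} (hs : s ^ 2 = 5) (n : ℕ) :
    2 ^ n * (Nat.fib n : R) * s = (1 + s) ^ n - (1 - s) ^ n := by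
  induction n using Nat.twoStepInduction with
  | zero => simp
  | one => simp only [pow_one, Nat.fib_one, Nat.cast_one, mul_one]; ring
  | more n ih ih' =>
    push_cast [Nat.fib_add_two]
    linear_combination 4 * ih + 2 * ih' + ((1 - s) ^ n - (1 + s) ^ n) * hs

theorem pow_eq_neg_of_sq_eq_five {p : ℕ} [Fact p.Prime] (hodd : Odd p) (h : legendreSym p 5 = -1)
    {K : Type*} [CommRing K] [Algebra (ZMod p) K] {s : K} (hs : s ^ 2 = 5) : s ^ p = -s := by
  have heuler : (5 : ZMod p) ^ (p / 2) = -1 := by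
    simpa [h] using (legendreSym.eq_pow p 5).symm
  have hfive : (5 : K) ^ (p / 2) = -1 := by
    simpa [map_ofNat] using congrArg (algebraMap (ZMod p) K) heuler
  obtain ⟨k, rfl⟩ := hodd
  rw [show 2 * k + 1 = 2 * ((2 * k + 1) / 2) + 1 by omega, pow_succ, pow_mul, hs, hfive]
  ring

theorem fib_succ_eq_zero_of_pow_eq_neg {K : Type*} [Field K] {p : ℕ} [Fact p.Prime] [CharP K p]
    (hp : p ≠ 2) {s : K} (hs : s ^ 2 = 5) (hs₀ : s ≠ 0) (hsp : s ^ p = -s) :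
    (Nat.fib (p + 1) : K) = 0 := by
  have h₂ : (2 : K) ≠ 0 := Ring.two_ne_zero (ringChar.eq K p ▸ hp)
  have hplus : (1 + s) ^ p = 1 - s := by rw [add_pow_char, one_pow, hsp, sub_eq_add_neg]
  have hminus : (1 - s) ^ p = 1 + s := by rw [sub_pow_char, one_pow, hsp, sub_neg_eq_add]
  have key := two_pow_mul_fib_mul_eq_sub hs (p + 1)
  rw [pow_succ (1 + s), pow_succ (1 - s), hplus, hminus, mul_comm (1 + s), sub_self] at key
  simpa [h₂, hs₀] using key

theorem dvd_fib_succ_of_legendreSym_eq_neg_one {p : ℕ} [Fact p.Prime] (h : legendreSym p 5 = -1) :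
    p ∣ Nat.fib (p + 1) := by
  rcases eq_or_ne p 2 with rfl | hp
  · decide
  have hodd : Odd p := (Fact.out : p.Prime).odd_of_ne_two hp
  let K := AlgebraicClosure (ZMod p)
  obtain ⟨s, hs⟩ := IsAlgClosed.exists_pow_nat_eq (5 : K) two_pos
  have h₅ : (5 : ZMod p) ≠ 0 := by
    intro h₀
    have := (legendreSym.eq_zero_iff p 5).mpr (by exact_mod_cast h₀)
    simp [h] at this
  have hs₀ : s ≠ 0 := by
    rintro rfl
    exact (map_ne_zero (algebraMap (ZMod p) K)).mpr h₅ (by simpa [map_ofNat, eq_comm] using hs)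
  exact (CharP.cast_eq_zero_iff K p _).mp <|
    fib_succ_eq_zero_of_pow_eq_neg hp hs hs₀ (pow_eq_neg_of_sq_eq_five hodd h hs)

theorem fibRank_dvd_add_one_of_legendre_neg_general (p : ℕ) [Fact p.Prime]
    (h : legendreSym p 5 = -1) : p ∣ Nat.fib (p + 1) ∧ fibRank p ∣ p + 1 :=
  have hdvd := dvd_fib_succ_of_legendreSym_eq_neg_one h
  ⟨hdvd, fibRank_dvd_of_dvd_fib p.succ_pos hdvd⟩

theorem fibRank_dvd_add_one_of_legendre_neg (p : ℕ) [Fact p.Prime] (hodd : Odd p)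
    (h : legendreSym p 5 = -1) : p ∣ Nat.fib (p + 1) ∧ fibRank p ∣ p + 1 :=
  fibRank_dvd_add_one_of_legendre_neg_general p h
end

section
/- For every odd prime q ≠ 5, the Pisano period π(q) divides q² - 1. -/
theorem pisano_dvd_sq_sub_one (q : ℕ) (hq : q.Prime) (hodd : Odd q) (h5 : q ≠ 5) :
    pisano q ∣ q ^ 2 - 1 := by
  have hfact : Fact q.Prime := ⟨hq⟩
  have hq2 : q ≠ 2 := by rintro rfl; exact (Nat.not_odd_iff_even.mpr (by norm_num)) hodd
  set F := GaloisField q 2 with hF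
  have : Fintype F := Fintype.ofFinite F
  have hcard : Fintype.card F = q ^ 2 := by
    rw [← Nat.card_eq_fintype_card]; exact GaloisField.card q 2 (by norm_num)
  -- 5 ≠ 0 in F
  have h5F : (5 : F) ≠ 0 := by
    have : ((5 : ℕ) : F) ≠ 0 := by
      rw [Ne, CharP.cast_eq_zero_iff F q]
      intro h
      exact h5 ((Nat.prime_dvd_prime_iff_eq hq (by norm_num)).mp h)
    simpa using this
  have h2F : (2 : F) ≠ 0 := by
    have : ((2 : ℕ) : F) ≠ 0 := by
      rw [Ne, CharP.cast_eq_zero_iff F q]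
      intro h
      exact hq2 ((Nat.prime_dvd_prime_iff_eq hq (by norm_num)).mp h)
    simpa using this
  -- (5 : F) ^ (q - 1) = 1
  have h5q : (5 : F) ^ q = 5 := by
    have := map_ofNat (frobenius F q) 5
    rwa [frobenius_def] at this
  have h5pow : (5 : F) ^ (q - 1) = 1 := by
    have h1 : (5 : F) ^ (q - 1) * 5 = 1 * 5 := by
      have hq1 : q - 1 + 1 = q := Nat.succ_pred_eq_of_pos hq.pos
      rw [one_mul, ← pow_succ, hq1, h5q]
    exact mul_right_cancel₀ h5F h1
  -- 5 is a square in F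
  have hchar : ringChar F ≠ 2 := by
    rw [ringChar.eq F q]; exact hq2
  have hexp : q ^ 2 / 2 = (q - 1) * ((q + 1) / 2) := by
    obtain ⟨m, rfl⟩ := hodd
    have h1 : (2 * m + 1) ^ 2 = 2 * (2 * m * m + 2 * m) + 1 := by ring
    have h2 : (2 * m + 1 + 1) / 2 = m + 1 := by omega
    have h3 : 2 * m + 1 - 1 = 2 * m := by omega
    rw [h1, h2, h3, Nat.mul_add_div two_pos]
    have : (1 : ℕ) / 2 = 0 := by norm_num
    rw [this]; ring
  have hsq : IsSquare (5 : F) := by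
    rw [FiniteField.isSquare_iff hchar h5F, hcard, hexp, pow_mul, h5pow, one_pow]
  obtain ⟨s, hs⟩ := hsq
  have hsne : s ≠ 0 := by
    rintro rfl; simp at hs; exact h5F hs
  set φ : F := (1 + s) / 2 with hφdef
  set ψ : F := (1 - s) / 2 with hψdef
  have hφ : φ ^ 2 = φ + 1 := by
    rw [hφdef, div_pow, div_add_one h2F, div_eq_div_iff (pow_ne_zero 2 h2F) h2F]; linear_combination (-2 : F) * hs
  have hψ : ψ ^ 2 = ψ + 1 := by
    rw [hψdef, div_pow, div_add_one h2F, div_eq_div_iff (pow_ne_zero 2 h2F) h2F]; linear_combination (-2 : F) * hs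
  have hprod : φ * ψ = -1 := by
    rw [hφdef, hψdef, div_mul_div_comm, div_eq_iff (mul_ne_zero h2F h2F)]; linear_combination hs
  have hφne : φ ≠ 0 := by
    intro h; rw [h, zero_mul] at hprod; simp at hprod
  have hψne : ψ ≠ 0 := by
    intro h; rw [h, mul_zero] at hprod; simp at hprod
  -- Binet
  have binet : ∀ n : ℕ, (Nat.fib n : F) * s = φ ^ n - ψ ^ n ∧
      (Nat.fib (n + 1) : F) * s = φ ^ (n + 1) - ψ ^ (n + 1) := by
    intro n
    induction n with
    | zero =>
      constructor
      · norm_num [Nat.fib_zero]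
      · simp only [zero_add, Nat.fib_one, Nat.cast_one, one_mul, pow_one]
        rw [hφdef, hψdef, ← sub_div, eq_div_iff h2F]; ring
    | succ n ih =>
      obtain ⟨ih1, ih2⟩ := ih
      refine ⟨ih2, ?_⟩
      have hrec : (Nat.fib (n + 2) : F) = Nat.fib n + Nat.fib (n + 1) := by
        rw [Nat.fib_add_two]; push_cast; ring
      rw [hrec]
      have e1 : φ ^ (n + 2) = φ ^ n * φ ^ 2 := by ring
      have e2 : ψ ^ (n + 2) = ψ ^ n * ψ ^ 2 := by ring
      rw [e1, e2, hφ, hψ]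
      linear_combination ih1 + ih2
  -- q^2 - 1 is a period
  have hφpow : φ ^ (q ^ 2 - 1) = 1 := by
    have := FiniteField.pow_card_sub_one_eq_one φ hφne
    rwa [hcard] at this
  have hψpow : ψ ^ (q ^ 2 - 1) = 1 := by
    have := FiniteField.pow_card_sub_one_eq_one ψ hψne
    rwa [hcard] at this
  have hperiod : ∀ n : ℕ, Nat.fib (n + (q ^ 2 - 1)) ≡ Nat.fib n [MOD q] := by
    intro n
    rw [← CharP.natCast_eq_natCast F q]
    have h1 := (binet (n + (q ^ 2 - 1))).1
    have h2 := (binet n).1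
    rw [pow_add, pow_add, hφpow, hψpow, mul_one, mul_one, ← h2] at h1
    exact mul_right_cancel₀ hsne h1
  -- divisibility of the sInf
  set S := {k | 0 < k ∧ ∀ n, Nat.fib (n + k) ≡ Nat.fib n [MOD q]} with hSdef
  have hq4 : 4 ≤ q ^ 2 := by nlinarith [hq.two_le]
  have hmem : q ^ 2 - 1 ∈ S := ⟨by omega, hperiod⟩
  have hS : pisano q ∈ S := Nat.sInf_mem ⟨_, hmem⟩
  have hdvd : ∀ k, k ∈ S → pisano q ∣ k := by
    intro k
    induction k using Nat.strong_induction_on with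
    | _ k ih =>
      intro hk
      have hle : pisano q ≤ k := Nat.sInf_le hk
      rcases eq_or_lt_of_le hle with h | h
      · exact h ▸ dvd_refl _
      · have hk' : k - pisano q ∈ S := by
          refine ⟨by omega, fun n => ?_⟩
          have h2 := hS.2 (n + (k - pisano q))
          have heq : n + (k - pisano q) + pisano q = n + k := by omega
          rw [heq] at h2
          exact h2.symm.trans (hk.2 n)
        have hd := ih (k - pisano q) (by have := hS.1; omega) hk'
        have : k = (k - pisano q) + pisano q := by omega
        rw [this]
        exact dvd_add hd dvd_rfl
  exact hdvd _ hmem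
end

section
/- Let q be an odd prime with (5/q) = -1. Then the Pisano period π(q) divides 2(q + 1). -/
open Polynomial

lemma key_period (q : ℕ) [Fact q.Prime] (hodd : Odd q) (h : legendreSym q 5 = -1) :
    ∀ n, Nat.fib (n + 2 * (q + 1)) ≡ Nat.fib n [MOD q] := by
  have hq2 : q ≠ 2 := by rintro rfl; exact (Nat.not_odd_iff_even.mpr (by norm_num)) hodd
  have h5 : (5 : ZMod q) ≠ 0 := by
    intro h50
    have := (legendreSym.eq_zero_iff q 5).mpr (by exact_mod_cast h50)
    omega
  have h2 : (2 : ZMod q) ≠ 0 := by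
    intro h20
    have : ((2:ℕ) : ZMod q) = 0 := by exact_mod_cast h20
    have hd := (ZMod.natCast_eq_zero_iff 2 q).mp this
    exact hq2 ((Nat.prime_dvd_prime_iff_eq (Fact.out) Nat.prime_two).mp hd)
  have hE : (5 : ZMod q) ^ (q / 2) = -1 := by
    have := (legendreSym.eq_pow q 5).symm
    rw [h] at this; push_cast at this; rw [this]
  set f : (ZMod q)[X] := X ^ 2 - C 5 with hf
  have hdeg : f.degree = 2 := by
    rw [hf]; exact Polynomial.degree_X_pow_sub_C (by norm_num) 5
  set ι : ZMod q →+* AdjoinRoot f := AdjoinRoot.of f with hι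
  have hinj : Function.Injective ι :=
    AdjoinRoot.of.injective_of_degree_ne_zero (by rw [hdeg]; norm_num)
  have hchar : CharP (AdjoinRoot f) q := charP_of_injective_ringHom hinj q
  set R := AdjoinRoot f
  set s : R := AdjoinRoot.root f with hs
  have hs2 : s ^ 2 = ι 5 := by
    have := AdjoinRoot.eval₂_root f
    rw [hf] at this
    simp only [eval₂_sub, eval₂_X_pow, eval₂_C, sub_eq_zero] at this
    exact this
  set u : R := ι (2 : ZMod q)⁻¹ with hu
  have h2u : 2 * u = 1 := by
    have : ι 2 * ι (2:ZMod q)⁻¹ = 1 := by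
      rw [← map_mul, mul_inv_cancel₀ h2, map_one]
    rw [map_ofNat] at this; exact this
  -- s^q = -s
  have hqodd : q = 2 * (q / 2) + 1 := by
    rcases hodd with ⟨k, hk⟩; omega
  have hsq : s ^ q = -s := by
    calc s ^ q = (s ^ 2) ^ (q / 2) * s := by rw [← pow_mul, ← pow_succ, ← hqodd]
    _ = ι ((5 : ZMod q) ^ (q/2)) * s := by rw [hs2, map_pow]
    _ = -s := by rw [hE]; simp
  set φ : R := (1 + s) * u with hφd
  set ψ : R := (1 - s) * u with hψd
  have hmul : φ * ψ = -1 := by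
    rw [hφd, hψd]
    have h5R : s ^ 2 = 5 := by rw [hs2]; simp [map_ofNat]
    linear_combination (-(u^2)) * h5R + (-2*u - 1) * h2u
  have hφ2 : φ ^ 2 = φ + 1 := by
    rw [hφd]
    have h5R : s ^ 2 = 5 := by rw [hs2]; simp [map_ofNat]
    linear_combination (u^2) * h5R + ((3 + s)*u + 1) * h2u
  have hψ2 : ψ ^ 2 = ψ + 1 := by
    rw [hψd]
    have h5R : s ^ 2 = 5 := by rw [hs2]; simp [map_ofNat]
    linear_combination (u^2) * h5R + ((3 - s)*u + 1) * h2u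
  -- Frobenius
  have huq : u ^ q = u := by
    rw [hu, ← map_pow, ZMod.pow_card]
  have hfrφ : φ ^ q = ψ := by
    rw [hφd, mul_pow, add_pow_char, one_pow, hsq, huq, hψd]
    ring
  have hfrψ : ψ ^ q = φ := by
    rw [hψd, mul_pow, sub_eq_add_neg, add_pow_char, one_pow, Odd.neg_pow hodd, hsq,
      huq, hφd]
    ring
  have hφT : φ ^ (2 * (q + 1)) = 1 := by
    have h1 : φ ^ (q + 1) = -1 := by rw [pow_succ, hfrφ, mul_comm]; exact hmul
    rw [mul_comm, pow_mul, h1]; ring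
  have hψT : ψ ^ (2 * (q + 1)) = 1 := by
    have h1 : ψ ^ (q + 1) = -1 := by rw [pow_succ, hfrψ]; exact hmul
    rw [mul_comm, pow_mul, h1]; ring
  -- Binet
  have hB : ∀ n : ℕ, ι (Nat.fib n : ZMod q) * (φ - ψ) = φ ^ n - ψ ^ n ∧
      ι (Nat.fib (n+1) : ZMod q) * (φ - ψ) = φ ^ (n+1) - ψ ^ (n+1) := by
    intro n
    induction n with
    | zero => constructor <;> simp
    | succ k ih =>
      refine ⟨ih.2, ?_⟩
      have hrec : (Nat.fib (k+2) : ZMod q) = (Nat.fib k : ZMod q) + Nat.fib (k+1) := by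
        rw [Nat.fib_add_two]; push_cast; ring
      have hφr : φ ^ (k+2) = φ ^ (k+1) + φ ^ k := by
        have : φ ^ (k+2) = φ ^ k * φ ^ 2 := by ring
        rw [this, hφ2]; ring
      have hψr : ψ ^ (k+2) = ψ ^ (k+1) + ψ ^ k := by
        have : ψ ^ (k+2) = ψ ^ k * ψ ^ 2 := by ring
        rw [this, hψ2]; ring
      rw [hrec, map_add, add_mul, ih.1, ih.2, hφr, hψr]
      ring
  -- s is a unit; φ - ψ = s
  have hφψs : φ - ψ = s := by
    rw [hφd, hψd]
    linear_combination s * h2u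
  have hsu : IsUnit s := by
    refine IsUnit.of_mul_eq_one (s * ι (5:ZMod q)⁻¹) ?_
    rw [← mul_assoc, ← sq, hs2, ← map_mul, mul_inv_cancel₀ h5, map_one]
  intro n
  have e1 := (hB (n + 2 * (q + 1))).1
  have e2 := (hB n).1
  rw [pow_add, hφT, pow_add, hψT, mul_one, mul_one] at e1
  rw [← e2, hφψs] at e1
  have hcast : ((Nat.fib (n + 2 * (q + 1)) : ZMod q)) = (Nat.fib n : ZMod q) :=
    hinj (hsu.mul_right_cancel e1)
  exact (ZMod.natCast_eq_natCast_iff _ _ _).mp hcast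

theorem pisano_dvd_two_mul_add_one (q : ℕ) [Fact q.Prime] (hodd : Odd q)
    (h : legendreSym q 5 = -1) : pisano q ∣ 2 * (q + 1) := by
  set S : Set ℕ := {k | 0 < k ∧ ∀ n, Nat.fib (n + k) ≡ Nat.fib n [MOD q]} with hS
  have hTS : 2 * (q + 1) ∈ S := ⟨by omega, key_period q hodd h⟩
  have hne : S.Nonempty := ⟨_, hTS⟩
  have hm : pisano q ∈ S := Nat.sInf_mem hne
  set m := pisano q with hmdef
  obtain ⟨hmpos, hmper⟩ := hm
  have hiter : ∀ t n, Nat.fib (n + m * t) ≡ Nat.fib n [MOD q] := by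
    intro t
    induction t with
    | zero => intro n; simp [Nat.ModEq.refl]
    | succ k ih =>
      intro n
      have : n + m * (k + 1) = (n + m * k) + m := by ring
      rw [this]
      exact (hmper (n + m * k)).trans (ih n)
  set r := 2 * (q + 1) % m with hr
  have hrper : ∀ n, Nat.fib (n + r) ≡ Nat.fib n [MOD q] := by
    intro n
    have h1 : Nat.fib ((n + r) + m * (2 * (q + 1) / m)) ≡ Nat.fib (n + r) [MOD q] :=
      hiter _ _
    have h2 : (n + r) + m * (2 * (q + 1) / m) = n + 2 * (q + 1) := by
      have := Nat.div_add_mod (2 * (q + 1)) m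
      omega
    rw [h2] at h1
    exact h1.symm.trans (hTS.2 n)
  by_cases hr0 : r = 0
  · exact Nat.dvd_of_mod_eq_zero hr0
  · exfalso
    have hrS : r ∈ S := ⟨Nat.pos_of_ne_zero hr0, hrper⟩
    have h3 := Nat.sInf_le hrS
    have hmS : m = sInf S := by rw [hmdef, pisano, hS]
    rw [← hmS] at h3
    have hlt : r < m := Nat.mod_lt _ hmpos
    omega
end

section
/- Let q > 5 be a prime such that p = 2q + 1 is also prime and z(p) divides π(q). Then the Legendre symbol (5/p) = -1. -/
/-- Binet-style identity. -/
lemma binet {F : Type*} [CommRing F] {α : F} (hα : α ^ 2 = α + 1) :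
    ∀ n : ℕ, α ^ (n + 1) = (Nat.fib (n + 1) : F) * α + (Nat.fib n : F)
  | 0 => by simp
  | n + 1 => by
    have h := binet hα n
    have h2 : α ^ (n + 1 + 1) = α ^ (n + 1) * α := by ring
    rw [h2, h, Nat.fib_add_two]
    push_cast
    linear_combination (Nat.fib (n + 1) : F) * hα

lemma fib_period_of_pow {F : Type*} [Field F] {α : F} (hα : α ^ 2 = α + 1)
    (h5 : (5 : F) ≠ 0) {c : ℕ} (hac : α ^ c = 1) (hbc : (1 - α) ^ c = 1) (n : ℕ) :
    ((Nat.fib (n + c) : F)) = (Nat.fib n : F) := by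
  have hβ : (1 - α) ^ 2 = (1 - α) + 1 := by linear_combination hα
  have hne : (2 * α - 1) ≠ 0 := by
    intro h
    exact h5 (by linear_combination (2 * α - 1) * h - 4 * hα)
  have hshift : ∀ γ : F, γ ^ c = 1 → γ ^ (n + c + 1) = γ ^ (n + 1) := by
    intro γ hγ
    rw [show n + c + 1 = (n + 1) + c by ring, pow_add, hγ, mul_one]
  have e1 : (Nat.fib (n + c + 1) : F) * α + (Nat.fib (n + c) : F)
      = (Nat.fib (n + 1) : F) * α + (Nat.fib n : F) := by
    have b1 := binet hα (n + c)
    have b2 := binet hα n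
    rw [← b1, ← b2]; exact hshift α hac
  have e2 : (Nat.fib (n + c + 1) : F) * (1 - α) + (Nat.fib (n + c) : F)
      = (Nat.fib (n + 1) : F) * (1 - α) + (Nat.fib n : F) := by
    have b1 := binet hβ (n + c)
    have b2 := binet hβ n
    rw [← b1, ← b2]; exact hshift (1 - α) hbc
  have key : ((Nat.fib (n + c + 1) : F) - (Nat.fib (n + 1) : F)) * (2 * α - 1) = 0 := by
    linear_combination e1 - e2
  have h1 : (Nat.fib (n + c + 1) : F) = (Nat.fib (n + 1) : F) := by
    rcases mul_eq_zero.mp key with h | h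
    · exact sub_eq_zero.mp h
    · exact absurd h hne
  linear_combination e1 - α * h1

/-- In a field of characteristic `q`, a root of `x² = x + 1` satisfies `α^(q²) = α`. -/
lemma root_pow_card_sq {F : Type*} [Field F] (q : ℕ) [Fact q.Prime] [CharP F q]
    {α : F} (hα : α ^ 2 = α + 1) : α ^ (q ^ 2) = α := by
  have hγ : (α ^ q) ^ 2 = α ^ q + 1 := by
    rw [← pow_mul, mul_comm, pow_mul, hα, add_pow_char, one_pow]
  have hdich : α ^ q = α ∨ α ^ q = 1 - α := by
    have h0 : (α ^ q - α) * (α ^ q - (1 - α)) = 0 := by linear_combination hγ - hα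
    rcases mul_eq_zero.mp h0 with h | h
    · exact Or.inl (sub_eq_zero.mp h)
    · exact Or.inr (sub_eq_zero.mp h)
  have hsq : α ^ q ^ 2 = (α ^ q) ^ q := by rw [← pow_mul, sq]
  rcases hdich with h | h
  · rw [hsq, h, h]
  · rw [hsq, h, sub_pow_char, one_pow, h]; ring

/-- Existence of a positive Pisano period. -/
lemma pisano_exists (q : ℕ) [NeZero q] :
    ∃ k, 0 < k ∧ ∀ n, Nat.fib (n + k) ≡ Nat.fib n [MOD q] := by
  set g : ℕ → ZMod q × ZMod q := fun n => ((Nat.fib n : ZMod q), (Nat.fib (n + 1) : ZMod q))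
    with hg
  set T : ZMod q × ZMod q → ZMod q × ZMod q := fun x => (x.2, x.1 + x.2) with hT
  have hTinj : Function.Injective T := by
    rintro ⟨x1, x2⟩ ⟨y1, y2⟩ h
    simp only [hT, Prod.mk.injEq] at h
    obtain ⟨h1, h2⟩ := h
    subst h1
    simp only [add_left_inj] at h2
    simp [h2]
  have hstep : ∀ n, g (n + 1) = T (g n) := by
    intro n
    simp only [hg, hT]
    refine Prod.ext rfl ?_
    rw [show n + 1 + 1 = n + 2 by ring, Nat.fib_add_two]
    push_cast
    ring
  have hiter : ∀ n, g n = T^[n] (g 0) := by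
    intro n
    induction n with
    | zero => rfl
    | succ n ih => rw [hstep, ih, Function.iterate_succ_apply']
  have main : ∀ a b, a < b → g a = g b →
      ∃ k, 0 < k ∧ ∀ n, Nat.fib (n + k) ≡ Nat.fib n [MOD q] := by
    intro a b hab heq
    refine ⟨b - a, by omega, ?_⟩
    have h0 : g (b - a) = g 0 := by
      apply Function.Injective.iterate hTinj a
      have hb : g b = T^[a] (g (b - a)) := by
        rw [hiter (b - a), ← Function.iterate_add_apply, show a + (b - a) = b by omega,
          ← hiter b]
      rw [← hb, ← heq, hiter a]
    have hper : ∀ n, g (n + (b - a)) = g n := by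
      intro n
      induction n with
      | zero => simpa using h0
      | succ n ih =>
        rw [show n + 1 + (b - a) = (n + (b - a)) + 1 by ring, hstep, ih, hstep]
    intro n
    have := congrArg Prod.fst (hper n)
    simp only [hg] at this
    exact (ZMod.natCast_eq_natCast_iff _ _ _).mp this
  obtain ⟨a, b, hne, heq⟩ := Finite.exists_ne_map_eq_of_infinite g
  rcases hne.lt_or_gt with h | h
  · exact main a b h heq
  · exact main b a h heq.symm


lemma pisano_mem (q : ℕ) [NeZero q] :
    0 < pisano q ∧ ∀ n, Nat.fib (n + pisano q) ≡ Nat.fib n [MOD q] := by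
  have h := Nat.sInf_mem (s := {k | 0 < k ∧ ∀ n, Nat.fib (n + k) ≡ Nat.fib n [MOD q]})
    (pisano_exists q)
  exact h

/-- The Pisano period divides any period. -/
lemma pisano_dvd (q : ℕ) [NeZero q] {k : ℕ} (hk : 0 < k)
    (hper : ∀ n, Nat.fib (n + k) ≡ Nat.fib n [MOD q]) : pisano q ∣ k := by
  obtain ⟨hπ0, hπ⟩ := pisano_mem q
  induction k using Nat.strong_induction_on with
  | _ k ih =>
    have hle : pisano q ≤ k := Nat.sInf_le ⟨hk, hper⟩
    rcases Nat.lt_or_ge (pisano q) k with hlt | hge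
    · have hper' : ∀ n, Nat.fib (n + (k - pisano q)) ≡ Nat.fib n [MOD q] := by
        intro n
        calc Nat.fib (n + (k - pisano q))
            ≡ Nat.fib (n + (k - pisano q) + pisano q) [MOD q] := (hπ _).symm
          _ = Nat.fib (n + k) := by rw [show n + (k - pisano q) + pisano q = n + k by omega]
          _ ≡ Nat.fib n [MOD q] := hper n
      have hd := ih (k - pisano q) (by omega) (by omega) hper'
      have h2 := Nat.dvd_add hd (dvd_refl (pisano q))
      rwa [Nat.sub_add_cancel hle] at h2
    · have : pisano q = k := le_antisymm hle hge
      exact this ▸ dvd_rfl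


/-- The rank of apparition divides any index whose Fibonacci number is divisible by `p`. -/
lemma fibRank_dvd {p m : ℕ} (hm : 0 < m) (hdvd : p ∣ Nat.fib m) : fibRank p ∣ m := by
  have hne : Set.Nonempty {k | 0 < k ∧ p ∣ Nat.fib k} := ⟨m, hm, hdvd⟩
  obtain ⟨hz0, hzf⟩ := Nat.sInf_mem hne
  set z := fibRank p with hzdef
  have hg : p ∣ Nat.fib (Nat.gcd m z) := by
    rw [Nat.fib_gcd]
    exact Nat.dvd_gcd hdvd hzf
  have hg0 : 0 < Nat.gcd m z := Nat.gcd_pos_of_pos_left _ hm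
  have hle : z ≤ Nat.gcd m z := Nat.sInf_le ⟨hg0, hg⟩
  have hge : Nat.gcd m z ≤ z := Nat.le_of_dvd hz0 (Nat.gcd_dvd_right m z)
  have : Nat.gcd m z = z := le_antisymm hge hle
  exact this ▸ Nat.gcd_dvd_left m z

lemma fibRank_mem {p m : ℕ} (hm : 0 < m) (hdvd : p ∣ Nat.fib m) :
    0 < fibRank p ∧ p ∣ Nat.fib (fibRank p) :=
  Nat.sInf_mem (⟨m, hm, hdvd⟩ : Set.Nonempty {k | 0 < k ∧ p ∣ Nat.fib k})

/-- `pisano q` divides `q ^ 2 - 1` for a prime `q > 5`. -/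
lemma pisano_dvd_card_sub_one (q : ℕ) [Fact q.Prime] (hq5 : 5 < q) :
    pisano q ∣ q ^ 2 - 1 := by
  have hq := Fact.out (p := q.Prime)
  haveI : NeZero q := ⟨hq.ne_zero⟩
  have key : ∀ (K : Type) (_ : Field K) (_ : IsAlgClosed K) (_ : CharP K q),
      ∀ n, Nat.fib (n + (q ^ 2 - 1)) ≡ Nat.fib n [MOD q] := by
    intro K _ _ _
    have h2 : (2 : K) ≠ 0 := by
      have h := (CharP.cast_eq_zero_iff K q 2).not.mpr
        (fun hd => by have := Nat.le_of_dvd (by norm_num) hd; omega)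
      simpa using h
    have h5 : (5 : K) ≠ 0 := by
      have h := (CharP.cast_eq_zero_iff K q 5).not.mpr
        (fun hd => by have := Nat.le_of_dvd (by norm_num) hd; omega)
      simpa using h
    obtain ⟨s, hs⟩ := IsAlgClosed.exists_pow_nat_eq (5 : K) (n := 2) (by norm_num)
    have hα : ((1 + s) / 2 : K) ^ 2 = (1 + s) / 2 + 1 := by
      field_simp
      linear_combination hs
    set α : K := (1 + s) / 2 with hαdef
    have hα0 : α ≠ 0 := by
      intro h
      rw [h] at hα
      have : (1 : K) = 0 := by linear_combination -hα
      exact one_ne_zero this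
    have hβ : (1 - α) ^ 2 = (1 - α) + 1 := by linear_combination hα
    have hβ0 : (1 - α) ≠ 0 := by
      intro h
      have hα1 : α = 1 := by linear_combination -h
      rw [hα1] at hα
      have : (1 : K) = 0 := by linear_combination -hα
      exact one_ne_zero this
    have hq20 : 1 ≤ q ^ 2 := by
      have : q ^ 2 = q * q := sq q
      nlinarith
    have hpow : ∀ γ : K, γ ^ 2 = γ + 1 → γ ≠ 0 → γ ^ (q ^ 2 - 1) = 1 := by
      intro γ hγ hγ0
      have h1 : γ ^ (q ^ 2 - 1) * γ = γ := by
        rw [← pow_succ, Nat.sub_add_cancel hq20]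
        exact root_pow_card_sq q hγ
      exact mul_right_cancel₀ hγ0 (h1.trans (one_mul γ).symm)
    intro n
    have hcast := fib_period_of_pow hα h5 (hpow α hα hα0) (hpow (1 - α) hβ hβ0) n
    exact (CharP.natCast_eq_natCast K q).mp hcast
  have hper := key (AlgebraicClosure (ZMod q)) inferInstance inferInstance inferInstance
  have hq21 : 0 < q ^ 2 - 1 := by
    have h1 : q ^ 2 = q * q := sq q
    have h2 : 6 * 6 ≤ q * q := Nat.mul_le_mul (by omega) (by omega)
    omega
  exact pisano_dvd q hq21 hper


theorem legendre_five_neg_one_at_p (q p : ℕ) [Fact q.Prime] [Fact p.Prime]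
    (hq5 : 5 < q) (hp : p = 2 * q + 1) (hz : fibRank p ∣ pisano q) :
    legendreSym p 5 = -1 := by
  have hqp := Fact.out (p := q.Prime)
  have hpp := Fact.out (p := p.Prime)
  have hp13 : 13 ≤ p := by omega
  have hnd : ∀ m : ℕ, 0 < m → m < p → ((m : ZMod p) ≠ 0) := by
    intro m hm0 hmp h
    have hd := (ZMod.natCast_eq_zero_iff m p).mp h
    have := Nat.le_of_dvd hm0 hd
    omega
  have h5 : (5 : ZMod p) ≠ 0 := by
    have := hnd 5 (by norm_num) (by omega)
    simpa using this
  have h2 : (2 : ZMod p) ≠ 0 := by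
    have := hnd 2 (by norm_num) (by omega)
    simpa using this
  have h5p : (((5 : ℤ) : ZMod p)) ≠ 0 := by push_cast; exact h5
  rcases legendreSym.eq_one_or_neg_one p h5p with h1 | h1
  swap
  · exact h1
  exfalso
  obtain ⟨s, hs⟩ := (legendreSym.eq_one_iff p h5p).mp h1
  have hs' : s ^ 2 = (5 : ZMod p) := by
    push_cast at hs
    rw [sq]
    exact hs.symm
  have hα : ((1 + s) / 2 : ZMod p) ^ 2 = (1 + s) / 2 + 1 := by
    field_simp
    linear_combination hs'
  set α : ZMod p := (1 + s) / 2 with hαdef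
  have hα0 : α ≠ 0 := by
    intro h
    rw [h] at hα
    have : (1 : ZMod p) = 0 := by linear_combination -hα
    exact one_ne_zero this
  have hβ : (1 - α) ^ 2 = (1 - α) + 1 := by linear_combination hα
  have hβ0 : (1 - α) ≠ 0 := by
    intro h
    have hα1 : α = 1 := by linear_combination -h
    rw [hα1] at hα
    have : (1 : ZMod p) = 0 := by linear_combination -hα
    exact one_ne_zero this
  have hfib := fib_period_of_pow hα h5 (ZMod.pow_card_sub_one_eq_one hα0)
    (ZMod.pow_card_sub_one_eq_one hβ0) 0
  rw [zero_add, Nat.fib_zero, Nat.cast_zero] at hfib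
  have hdvd : p ∣ Nat.fib (p - 1) := (ZMod.natCast_eq_zero_iff _ p).mp hfib
  have hz1 : fibRank p ∣ p - 1 := fibRank_dvd (by omega) hdvd
  obtain ⟨hzpos, hzfib⟩ := fibRank_mem (show 0 < p - 1 by omega) hdvd
  have hπ : pisano q ∣ q ^ 2 - 1 := pisano_dvd_card_sub_one q hq5
  have hzq2 : fibRank p ∣ q ^ 2 - 1 := hz.trans hπ
  have hq21 : 1 ≤ q ^ 2 := Nat.one_le_pow _ _ (by omega)
  have hqz : ¬ q ∣ fibRank p := by
    intro h
    have hA : q ∣ q ^ 2 - 1 := h.trans hzq2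
    have hB : q ∣ q ^ 2 := dvd_pow_self q (by norm_num)
    have hC : q ∣ q ^ 2 - (q ^ 2 - 1) := Nat.dvd_sub hB hA
    rw [show q ^ 2 - (q ^ 2 - 1) = 1 by omega] at hC
    have := Nat.le_of_dvd (by norm_num) hC
    omega
  have hcop : (fibRank p).Coprime q :=
    Nat.Coprime.symm ((Nat.Prime.coprime_iff_not_dvd hqp).mpr hqz)
  have hz2q : fibRank p ∣ 2 * q := by
    rw [show 2 * q = p - 1 by omega]
    exact hz1
  have hz2 : fibRank p ∣ 2 := Nat.Coprime.dvd_of_dvd_mul_right hcop hz2q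
  have hfz : Nat.fib (fibRank p) = 1 := by
    rcases (Nat.dvd_prime Nat.prime_two).mp hz2 with h | h <;> rw [h]
    · exact Nat.fib_one
    · exact Nat.fib_two
  rw [hfz] at hzfib
  have := Nat.le_of_dvd (by norm_num) hzfib
  omega
end

section
/- Let q be an odd prime with (5/q) = -1, and let α ∈ F_{q²} be a root of x² - x - 1 with α^{q+1} = -1. If e is the multiplicative order of α in F_{q²}^×, then 2(q+1)/e is an odd integer; in particular v₂(e) = 1 + v₂(q+1). -/
/-!
Since `α ^ (q + 1) = -1` and `-1 ≠ 1` in a field of odd order `q ^ 2`, the order `e` of `α` divides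
`2 (q + 1)` but not `q + 1`. Hence the cofactor `2 (q + 1) / e` is odd, and `e` carries all the
factors of two of `2 (q + 1)`.
-/

theorem FiniteField.neg_one_ne_one_of_odd_card {F : Type*} [Field F] [Fintype F]
    (h : Odd (Fintype.card F)) : (-1 : F) ≠ 1 :=
  Ring.neg_one_ne_one_of_char_ne_two fun h2 ↦ by
    have := FiniteField.even_card_of_char_two h2
    rw [Nat.odd_iff] at h
    omega

section PowEqNegOne

variable {R : Type*} [Ring R] {x : R} {n : ℕ}

theorem orderOf_dvd_two_mul_of_pow_eq_neg_one (hx : x ^ n = -1) : orderOf x ∣ 2 * n :=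
  orderOf_dvd_of_pow_eq_one (by rw [mul_comm, pow_mul, hx, neg_one_sq])

theorem not_orderOf_dvd_of_pow_eq_neg_one (h : (-1 : R) ≠ 1) (hx : x ^ n = -1) :
    ¬ orderOf x ∣ n := fun hd ↦ h (hx ▸ orderOf_dvd_iff_pow_eq_one.mp hd)

end PowEqNegOne

section DvdTwoMul

variable {e m : ℕ}

theorem Nat.odd_two_mul_div_of_dvd_of_not_dvd (he : e ∣ 2 * m) (hnd : ¬ e ∣ m) :
    Odd (2 * m / e) := by
  obtain ⟨k, hk⟩ := he
  have he0 : e ≠ 0 := by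
    rintro rfl
    exact hnd ⟨0, by omega⟩
  rw [hk, Nat.mul_div_cancel_left _ (Nat.pos_of_ne_zero he0), ← Nat.not_even_iff_odd]
  rintro ⟨j, rfl⟩
  exact hnd ⟨j, by linarith⟩

theorem padicValNat_two_eq_of_dvd_two_mul_of_not_dvd (hm : m ≠ 0) (he : e ∣ 2 * m)
    (hnd : ¬ e ∣ m) : padicValNat 2 e = 1 + padicValNat 2 m := by
  have hk : Odd (2 * m / e) := Nat.odd_two_mul_div_of_dvd_of_not_dvd he hnd
  have hmul : e * (2 * m / e) = 2 * m := Nat.mul_div_cancel' he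
  have he0 : e ≠ 0 := by rintro rfl; omega
  calc padicValNat 2 e
      = padicValNat 2 e + padicValNat 2 (2 * m / e) := by
        rw [padicValNat.eq_zero_of_not_dvd (Nat.not_even_iff_odd.mpr hk ∘ even_iff_two_dvd.mpr),
          add_zero]
    _ = padicValNat 2 (2 * m) := by rw [← padicValNat.mul he0 hk.pos.ne', hmul]
    _ = 1 + padicValNat 2 m := by rw [padicValNat.mul two_ne_zero hm, padicValNat_self]

end DvdTwoMul

theorem order_of_root_char_poly_general (q : ℕ) (hodd : Odd q)
    (F : Type*) [Field F] [Fintype F] (hcard : Fintype.card F = q ^ 2)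
    (α : F) (hfrob : α ^ (q + 1) = -1) :
    orderOf α ∣ 2 * (q + 1) ∧ Odd (2 * (q + 1) / orderOf α) ∧
      padicValNat 2 (orderOf α) = 1 + padicValNat 2 (q + 1) := by
  have hneg : (-1 : F) ≠ 1 := FiniteField.neg_one_ne_one_of_odd_card (hcard ▸ hodd.pow)
  have hdvd := orderOf_dvd_two_mul_of_pow_eq_neg_one hfrob
  have hndvd := not_orderOf_dvd_of_pow_eq_neg_one hneg hfrob
  exact ⟨hdvd, Nat.odd_two_mul_div_of_dvd_of_not_dvd hdvd hndvd,
    padicValNat_two_eq_of_dvd_two_mul_of_not_dvd q.succ_ne_zero hdvd hndvd⟩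

theorem order_of_root_char_poly (q : ℕ) (hq : q.Prime) (hodd : Odd q)
    (F : Type*) [Field F] [Fintype F] (hcard : Fintype.card F = q ^ 2)
    (α : F) (hα : α ^ 2 = α + 1) (hfrob : α ^ (q + 1) = -1) :
    orderOf α ∣ 2 * (q + 1) ∧ Odd (2 * (q + 1) / orderOf α) ∧
      padicValNat 2 (orderOf α) = 1 + padicValNat 2 (q + 1) :=
  order_of_root_char_poly_general q hodd F hcard α hfrob
end

section
/- Let q be an odd prime and p ≡ 1 (mod q) a prime with z(p) ∣ π(q). Then for every r with z(p) ∣ r, every m ≡ r (mod π(q)) satisfies q ∣ φ(F_m); that is, the residue class r mod π(q) lies in S(q). -/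
theorem dvd_fib_of_fibRank_dvd {p n : ℕ} (h : fibRank p ∣ n) : p ∣ Nat.fib n := by
  rcases Set.eq_empty_or_nonempty {k | 0 < k ∧ p ∣ Nat.fib k} with hempty | hne
  · -- `sInf ∅ = 0`, so `n = 0` and `fib 0 = 0`.
    rw [fibRank, hempty, Nat.sInf_empty, zero_dvd_iff] at h
    simp [h]
  · exact (Nat.sInf_mem hne).2.trans (Nat.fib_dvd _ _ h)

theorem dvd_totient_of_prime_dvd {p q n : ℕ} (hp : p.Prime) (hcong : p ≡ 1 [MOD q])
    (h : p ∣ n) : q ∣ n.totient := by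
  have hq : q ∣ p.totient := by
    rw [Nat.totient_prime hp]
    exact (Nat.modEq_iff_dvd' hp.one_lt.le).1 hcong.symm
  exact hq.trans (Nat.totient_dvd_of_dvd h)

theorem mem_S_of_rank_dvd_general (q p : ℕ) (hp : p.Prime)
    (hcong : p ≡ 1 [MOD q]) (hz : fibRank p ∣ pisano q) :
    ∀ r, fibRank p ∣ r → ∀ m, 1 ≤ m → m ≡ r [MOD pisano q] →
      q ∣ Nat.totient (Nat.fib m) := by
  intro r hr m _ hmr
  have hm : fibRank p ∣ m := (hmr.dvd_iff hz).2 hr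
  exact dvd_totient_of_prime_dvd hp hcong (dvd_fib_of_fibRank_dvd hm)

theorem mem_S_of_rank_dvd (q p : ℕ) (hq : q.Prime) (hqodd : Odd q) (hp : p.Prime)
    (hcong : p ≡ 1 [MOD q]) (hz : fibRank p ∣ pisano q) :
    ∀ r, fibRank p ∣ r → ∀ m, 1 ≤ m → m ≡ r [MOD pisano q] →
      q ∣ Nat.totient (Nat.fib m) :=
  mem_S_of_rank_dvd_general q p hp hcong hz
end
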